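/- Proposition A.3 (the relaxation (R) is sharp when the constant state or a Dirac mass is the global minimizer): let W : 𝕋^d → ℝ be continuous with W(−x) = W(x). (a) If W(x) = Σ_{k∈ℤ^d} a_k cos(2π k·x) with a_k = a_{−k} ≥ 0 for all k ≠ 0, a_0 = 0, and Σ_k a_k < ∞, then every measure F in the relaxed cone C satisfies (1/2)∫ W dF ≥ 0 = E(Haar); hence the infimum of (1/2)∫ W dF over C equals the minimum energy and is attained at F = Haar. (b) If W(0) ≤ W(x) for all x ∈ 𝕋^d, then every F ∈ C satisfies (1/2)∫ W dF ≥ (1/2)W(0) = E(δ_0); hence the infimum over C equals the minimum energy and is attained at F = δ_0. -/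

import Mathlib

open MeasureTheory Real
open scoped ENNReal

theorem cos2pi_periodic : Function.Periodic (fun t : ℝ => Real.cos (2 * Real.pi * t)) 1 := by
  intro x; simp [mul_add, Real.cos_add_two_pi]

theorem sin2pi_periodic : Function.Periodic (fun t : ℝ => Real.sin (2 * Real.pi * t)) 1 := by
  intro x; simp [mul_add, Real.sin_add_two_pi]

/-- The function `x ↦ cos (2π x)` on the circle `ℝ/ℤ`. -/
noncomputable def cosA : AddCircle (1 : ℝ) → ℝ := cos2pi_periodic.lift

/-- The function `x ↦ sin (2π x)` on the circle `ℝ/ℤ`. -/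
noncomputable def sinA : AddCircle (1 : ℝ) → ℝ := sin2pi_periodic.lift

/-- The `d`-dimensional torus `𝕋^d = ℝ^d/ℤ^d`, with its Haar probability measure `volume`. -/
abbrev Torus (d : ℕ) := Fin d → AddCircle (1 : ℝ)

/-- `cos (2π k·x)` for `k ∈ ℤ^d` and `x ∈ 𝕋^d`. -/
noncomputable def tcos {d : ℕ} (k : Fin d → ℤ) (x : Torus d) : ℝ := cosA (∑ i, k i • x i)

/-- `sin (2π k·x)` for `k ∈ ℤ^d` and `x ∈ 𝕋^d`. -/
noncomputable def tsin {d : ℕ} (k : Fin d → ℤ) (x : Torus d) : ℝ := sinA (∑ i, k i • x i)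

/-- The autocorrelation of a measure `ρ` on `𝕋^d`: the pushforward of `ρ × ρ`
under `(x, y) ↦ x - y`. -/
noncomputable def autocorr {d : ℕ} (ρ : Measure (Torus d)) : Measure (Torus d) :=
  (ρ.prod ρ).map (fun p => p.1 - p.2)

/-- The relaxed cone `C`: nonnegative measures on `𝕋^d` of total mass one with vanishing
sine coefficients and nonnegative cosine coefficients for all `k ≠ 0`. -/
def inCone {d : ℕ} (F : Measure (Torus d)) : Prop :=
  F Set.univ = 1 ∧ ∀ k : Fin d → ℤ, k ≠ 0 →
    (∫ x, tsin k x ∂F) = 0 ∧ 0 ≤ ∫ x, tcos k x ∂F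

/-- The pairwise interaction energy `E(ρ) = (1/2) ∫∫ W(x - y) dρ(x) dρ(y)`. -/
noncomputable def energy {d : ℕ} (W : Torus d → ℝ) (ρ : Measure (Torus d)) : ℝ :=
  (1/2) * ∫ x, ∫ y, W (x - y) ∂ρ ∂ρ

/-!
In (a), expanding `W` gives `∫ W dF = ∑ a_k F̂_c(k)`, a sum of nonnegative terms on `C`; in (b),
`W ≥ W(0)` pointwise. Both bounds pass from `C` to the energy because
`E(ρ) = (1/2) ∫ W d(ρ ⋆ ρ̃)`, where the autocorrelation `ρ ⋆ ρ̃` lies in `C`: its Fourier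
coefficient at `k` is `|ρ̂(k)|² ≥ 0`. The Haar measure and `δ₀` lie in `C` and attain the bounds.
-/
open ComplexConjugate
open scoped ComplexOrder

instance : IsProbabilityMeasure (volume : Measure (AddCircle (1 : ℝ))) :=
  ⟨by simp [AddCircle.measure_univ]⟩

instance {d : ℕ} : (volume : Measure (Torus d)).IsNegInvariant :=
  Measure.IsAddHaarMeasure.isNegInvariant_of_regular _

lemma cosA_eq_re_toCircle (u : AddCircle (1 : ℝ)) : cosA u = (AddCircle.toCircle u : ℂ).re := by
  induction u using QuotientAddGroup.induction_on with
  | H t =>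
    rw [cosA, cos2pi_periodic.lift_coe, AddCircle.toCircle_apply_mk, Circle.coe_exp, div_one,
      Complex.exp_ofReal_mul_I_re]

lemma sinA_eq_im_toCircle (u : AddCircle (1 : ℝ)) : sinA u = (AddCircle.toCircle u : ℂ).im := by
  induction u using QuotientAddGroup.induction_on with
  | H t =>
    rw [sinA, sin2pi_periodic.lift_coe, AddCircle.toCircle_apply_mk, Circle.coe_exp, div_one,
      Complex.exp_ofReal_mul_I_im]

lemma AddCircle.toCircle_sum {T : ℝ} {ι : Type*} (s : Finset ι) (f : ι → AddCircle T) :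
    AddCircle.toCircle (∑ i ∈ s, f i) = ∏ i ∈ s, AddCircle.toCircle (f i) := by
  classical
  induction s using Finset.induction_on with
  | empty => simp
  | insert a s ha ih => rw [Finset.sum_insert ha, Finset.prod_insert ha, AddCircle.toCircle_add, ih]

lemma integral_fourier_eq_zero {T : ℝ} [hT : Fact (0 < T)] {n : ℤ} (hn : n ≠ 0) :
    ∫ x : AddCircle T, (fourier n x : ℂ) = 0 :=
  integral_eq_zero_of_add_right_eq_neg (fourier_add_half_inv_index hn hT.out)

lemma Continuous.integrable_of_compactSpace {X E : Type*} [TopologicalSpace X] [CompactSpace X]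
    [MeasurableSpace X] [OpensMeasurableSpace X] [NormedAddCommGroup E] {f : X → E}
    (hf : Continuous f) (μ : Measure X) [IsFiniteMeasure μ] : Integrable f μ :=
  hf.integrable_of_hasCompactSupport (.of_compactSpace f)

section Character

variable {d : ℕ}

noncomputable def torusChar (k : Fin d → ℤ) (x : Torus d) : ℂ :=
  AddCircle.toCircle (∑ i, k i • x i)

lemma re_torusChar (k : Fin d → ℤ) (x : Torus d) : (torusChar k x).re = tcos k x :=
  (cosA_eq_re_toCircle _).symm

lemma im_torusChar (k : Fin d → ℤ) (x : Torus d) : (torusChar k x).im = tsin k x :=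
  (sinA_eq_im_toCircle _).symm

lemma norm_torusChar (k : Fin d → ℤ) (x : Torus d) : ‖torusChar k x‖ = 1 :=
  Circle.norm_coe _

@[fun_prop]
lemma continuous_torusChar (k : Fin d → ℤ) : Continuous (torusChar k) := by
  unfold torusChar; fun_prop

@[fun_prop]
lemma continuous_tcos (k : Fin d → ℤ) : Continuous (tcos k) := by
  simp_rw [← funext (re_torusChar k)]
  fun_prop

lemma abs_tcos_le_one (k : Fin d → ℤ) (x : Torus d) : |tcos k x| ≤ 1 := by
  simpa only [re_torusChar, norm_torusChar] using Complex.abs_re_le_norm (torusChar k x)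

lemma torusChar_apply_zero (k : Fin d → ℤ) : torusChar k 0 = 1 := by
  simp [torusChar]

lemma torusChar_sub (k : Fin d → ℤ) (x y : Torus d) :
    torusChar k (x - y) = torusChar k x * conj (torusChar k y) := by
  simp only [torusChar, Pi.sub_apply, smul_sub, Finset.sum_sub_distrib]
  rw [sub_eq_add_neg, AddCircle.toCircle_add, AddCircle.toCircle_neg, Circle.coe_mul,
    Circle.coe_inv_eq_conj]

lemma torusChar_eq_prod_fourier (k : Fin d → ℤ) (x : Torus d) :
    torusChar k x = ∏ i, fourier (k i) (x i) := by
  simp only [torusChar, AddCircle.toCircle_sum, fourier_apply]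
  exact map_prod Circle.coeHom _ _

lemma integral_torusChar_volume {k : Fin d → ℤ} (hk : k ≠ 0) : ∫ x, torusChar k x = 0 := by
  obtain ⟨i, hi⟩ := Function.ne_iff.mp hk
  simp_rw [torusChar_eq_prod_fourier]
  rw [integral_fintype_prod_volume_eq_prod (fun i t => (fourier (k i) t : ℂ))]
  exact Finset.prod_eq_zero (Finset.mem_univ i) (integral_fourier_eq_zero hi)

lemma integral_torusChar_autocorr (k : Fin d → ℤ) (ρ : Measure (Torus d)) [IsFiniteMeasure ρ] :
    ∫ x, torusChar k x ∂autocorr ρ = Complex.normSq (∫ x, torusChar k x ∂ρ) := by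
  rw [autocorr, integral_map (by fun_prop) (continuous_torusChar k).aestronglyMeasurable]
  simp_rw [torusChar_sub]
  rw [integral_prod_mul (fun x => torusChar k x) (fun y => conj (torusChar k y)), integral_conj,
    Complex.mul_conj]

end Character

section Cone

variable {d : ℕ}

lemma integral_tcos_eq_re (k : Fin d → ℤ) (μ : Measure (Torus d)) [IsFiniteMeasure μ] :
    ∫ x, tcos k x ∂μ = (∫ x, torusChar k x ∂μ).re := by
  simp_rw [← re_torusChar]
  exact integral_re ((continuous_torusChar k).integrable_of_compactSpace μ)

lemma integral_tsin_eq_im (k : Fin d → ℤ) (μ : Measure (Torus d)) [IsFiniteMeasure μ] :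
    ∫ x, tsin k x ∂μ = (∫ x, torusChar k x ∂μ).im := by
  simp_rw [← im_torusChar]
  exact integral_im ((continuous_torusChar k).integrable_of_compactSpace μ)

-- In `ComplexOrder`, `0 ≤ z` says that `z` is a nonnegative real.
lemma inCone_of_integral_torusChar_nonneg (F : Measure (Torus d)) [IsProbabilityMeasure F]
    (hF : ∀ k : Fin d → ℤ, k ≠ 0 → 0 ≤ ∫ x, torusChar k x ∂F) : inCone F := by
  refine ⟨measure_univ, fun k hk => ?_⟩
  obtain ⟨hre, him⟩ := Complex.nonneg_iff.mp (hF k hk)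
  rw [integral_tsin_eq_im, integral_tcos_eq_re]
  exact ⟨him.symm, hre⟩

lemma inCone_volume : inCone (volume : Measure (Torus d)) :=
  inCone_of_integral_torusChar_nonneg _ fun _ hk => (integral_torusChar_volume hk).ge

lemma inCone_dirac : inCone (Measure.dirac (0 : Torus d)) :=
  inCone_of_integral_torusChar_nonneg _ fun k _ => by
    rw [integral_dirac, torusChar_apply_zero]
    exact zero_le_one

lemma inCone_autocorr (ρ : Measure (Torus d)) [IsProbabilityMeasure ρ] : inCone (autocorr ρ) := by
  have : IsProbabilityMeasure (autocorr ρ) := Measure.isProbabilityMeasure_map (by fun_prop)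
  exact inCone_of_integral_torusChar_nonneg _ fun k _ => by
    rw [integral_torusChar_autocorr]
    exact Complex.zero_le_real.mpr (Complex.normSq_nonneg _)

lemma inCone.isProbabilityMeasure {F : Measure (Torus d)} (hF : inCone F) :
    IsProbabilityMeasure F :=
  ⟨hF.1⟩

end Cone

section Energy

variable {d : ℕ} {W : Torus d → ℝ}

lemma energy_eq_integral_autocorr (hW : Continuous W) (ρ : Measure (Torus d))
    [IsFiniteMeasure ρ] : energy W ρ = (1/2) * ∫ x, W x ∂autocorr ρ := by
  rw [energy, autocorr, integral_map (by fun_prop) hW.aestronglyMeasurable,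
    integral_integral (f := fun x y => W (x - y))
      ((hW.comp (continuous_fst.sub continuous_snd)).integrable_of_compactSpace _)]

lemma le_energy_of_forall_inCone (hW : Continuous W) {m : ℝ}
    (hm : ∀ F : Measure (Torus d), inCone F → m ≤ (1/2) * ∫ x, W x ∂F)
    (ρ : Measure (Torus d)) [IsProbabilityMeasure ρ] : m ≤ energy W ρ := by
  rw [energy_eq_integral_autocorr hW]
  exact hm _ (inCone_autocorr ρ)

lemma energy_volume (W : Torus d → ℝ) : energy W volume = (1/2) * ∫ x, W x := by
  simp [energy, integral_sub_left_eq_self]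

lemma energy_dirac (W : Torus d → ℝ) : energy W (Measure.dirac 0) = (1/2) * W 0 := by
  simp [energy, integral_dirac]

end Energy

lemma integral_tcos_volume {d : ℕ} {k : Fin d → ℤ} (hk : k ≠ 0) : ∫ x, tcos k x = 0 := by
  rw [integral_tcos_eq_re, integral_torusChar_volume hk, Complex.zero_re]

section CosineSeries

variable {d : ℕ} {a : (Fin d → ℤ) → ℝ}

lemma integral_tsum_mul_tcos (ha : Summable a)
    (μ : Measure (Torus d)) [IsFiniteMeasure μ] :
    ∫ x, ∑' k, a k * tcos k x ∂μ = ∑' k, a k * ∫ x, tcos k x ∂μ := by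
  have hint (k : Fin d → ℤ) : Integrable (fun x => a k * tcos k x) μ :=
    ((continuous_tcos k).integrable_of_compactSpace μ).const_mul (a k)
  have hbound (k : Fin d → ℤ) : ∫ x, ‖a k * tcos k x‖ ∂μ ≤ |a k| * μ.real Set.univ :=
    calc ∫ x, ‖a k * tcos k x‖ ∂μ ≤ ∫ _, |a k| ∂μ :=
          integral_mono (hint k).norm (integrable_const _) fun x => by
            simpa [abs_mul] using mul_le_of_le_one_right (abs_nonneg (a k)) (abs_tcos_le_one k x)
      _ = |a k| * μ.real Set.univ := by simp [mul_comm]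
  have hsum : Summable fun k => ∫ x, ‖a k * tcos k x‖ ∂μ :=
    (ha.abs.mul_right _).of_nonneg_of_le (fun _ => integral_nonneg fun _ => norm_nonneg _) hbound
  rw [← integral_tsum_of_summable_integral_norm hint hsum]
  simp_rw [integral_const_mul]

lemma integral_tsum_mul_tcos_nonneg (ha_nonneg : ∀ k, k ≠ 0 → 0 ≤ a k) (ha_zero : a 0 = 0)
    (ha : Summable a) {F : Measure (Torus d)} (hF : inCone F) :
    0 ≤ ∫ x, ∑' k, a k * tcos k x ∂F := by
  have := hF.isProbabilityMeasure
  rw [integral_tsum_mul_tcos ha]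
  refine tsum_nonneg fun k => ?_
  rcases eq_or_ne k 0 with rfl | hk
  · simp [ha_zero]
  · exact mul_nonneg (ha_nonneg k hk) (hF.2 k hk).2

lemma integral_tsum_mul_tcos_volume (ha_zero : a 0 = 0) (ha : Summable a) :
    ∫ x, ∑' k, a k * tcos k x = 0 := by
  rw [integral_tsum_mul_tcos ha, ← tsum_zero]
  refine tsum_congr fun k => ?_
  rcases eq_or_ne k 0 with rfl | hk
  · simp [ha_zero]
  · rw [integral_tcos_volume hk, mul_zero]

end CosineSeries

theorem stmt16_general {d : ℕ} (W : Torus d → ℝ) (hWc : Continuous W) :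
    (∀ a : (Fin d → ℤ) → ℝ, (∀ k, a (-k) = a k) → (∀ k, k ≠ 0 → 0 ≤ a k) → a 0 = 0 →
        Summable a → (∀ x, W x = ∑' k : Fin d → ℤ, a k * tcos k x) →
        (∀ F : Measure (Torus d), inCone F → 0 ≤ (1/2) * ∫ x, W x ∂F) ∧
          inCone (volume : Measure (Torus d)) ∧
          (1/2) * (∫ x, W x ∂(volume : Measure (Torus d))) = 0 ∧
          energy W (volume : Measure (Torus d)) = 0 ∧
          (∀ ρ : Measure (Torus d), IsProbabilityMeasure ρ →
            energy W (volume : Measure (Torus d)) ≤ energy W ρ)) ∧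
      ((∀ x, W 0 ≤ W x) →
        (∀ F : Measure (Torus d), inCone F → (1/2) * W 0 ≤ (1/2) * ∫ x, W x ∂F) ∧
          inCone (Measure.dirac (0 : Torus d)) ∧
          (1/2) * (∫ x, W x ∂(Measure.dirac (0 : Torus d))) = (1/2) * W 0 ∧
          energy W (Measure.dirac (0 : Torus d)) = (1/2) * W 0 ∧
          (∀ ρ : Measure (Torus d), IsProbabilityMeasure ρ →
            energy W (Measure.dirac (0 : Torus d)) ≤ energy W ρ)) := by
  refine ⟨fun a _ ha_nonneg ha_zero ha hW => ?_, fun hmin => ?_⟩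
  · have hbound (F : Measure (Torus d)) (hF : inCone F) : 0 ≤ (1/2) * ∫ x, W x ∂F := by
      simp_rw [hW]
      exact mul_nonneg one_half_pos.le (integral_tsum_mul_tcos_nonneg ha_nonneg ha_zero ha hF)
    have hvolume : ∫ x, W x = 0 := by
      simp_rw [hW]
      exact integral_tsum_mul_tcos_volume ha_zero ha
    have henergy : energy W volume = 0 := by rw [energy_volume, hvolume, mul_zero]
    refine ⟨hbound, inCone_volume, by rw [hvolume, mul_zero], henergy, fun ρ _ => ?_⟩
    rw [henergy]
    exact le_energy_of_forall_inCone hWc hbound ρ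
  · have hbound (F : Measure (Torus d)) (hF : inCone F) :
        (1/2) * W 0 ≤ (1/2) * ∫ x, W x ∂F := by
      have := hF.isProbabilityMeasure
      gcongr
      simpa using integral_mono (integrable_const (W 0)) (hWc.integrable_of_compactSpace F) hmin
    refine ⟨hbound, inCone_dirac, by rw [integral_dirac], energy_dirac W, fun ρ _ => ?_⟩
    rw [energy_dirac]
    exact le_energy_of_forall_inCone hWc hbound ρ

/-- Proposition A.3: the relaxation (R) is sharp when the constant state or a Dirac mass is
the global minimizer.  (a) If `W` has nonnegative cosine coefficients then `(1/2) ∫ W dF ≥ 0`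
on the relaxed cone `C`, the bound is attained by the Haar measure, and `E(Haar) = 0` is the
minimum energy.  (b) If `W(0) ≤ W(x)` for all `x` then `(1/2) ∫ W dF ≥ (1/2) W(0)` on `C`,
the bound is attained by `δ₀`, and `E(δ₀) = W(0)/2` is the minimum energy. -/
theorem stmt16 {d : ℕ} (W : Torus d → ℝ) (hWc : Continuous W) (hWsymm : ∀ x, W (-x) = W x) :
    (∀ a : (Fin d → ℤ) → ℝ, (∀ k, a (-k) = a k) → (∀ k, k ≠ 0 → 0 ≤ a k) → a 0 = 0 →
        Summable a → (∀ x, W x = ∑' k : Fin d → ℤ, a k * tcos k x) →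
        (∀ F : Measure (Torus d), inCone F → 0 ≤ (1/2) * ∫ x, W x ∂F) ∧
          inCone (volume : Measure (Torus d)) ∧
          (1/2) * (∫ x, W x ∂(volume : Measure (Torus d))) = 0 ∧
          energy W (volume : Measure (Torus d)) = 0 ∧
          (∀ ρ : Measure (Torus d), IsProbabilityMeasure ρ →
            energy W (volume : Measure (Torus d)) ≤ energy W ρ)) ∧
      ((∀ x, W 0 ≤ W x) →
        (∀ F : Measure (Torus d), inCone F → (1/2) * W 0 ≤ (1/2) * ∫ x, W x ∂F) ∧
          inCone (Measure.dirac (0 : Torus d)) ∧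
          (1/2) * (∫ x, W x ∂(Measure.dirac (0 : Torus d))) = (1/2) * W 0 ∧
          energy W (Measure.dirac (0 : Torus d)) = (1/2) * W 0 ∧
          (∀ ρ : Measure (Torus d), IsProbabilityMeasure ρ →
            energy W (Measure.dirac (0 : Torus d)) ≤ energy W ρ)) :=
  stmt16_general W hWc
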